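/- arXiv:2407.13602 — 4 statements merged into one kernel-verified Lean document; each statement's English description precedes it below -/
import Mathlib

section
/- Let a, b, C be natural numbers and suppose F is a subgroup of (ℤ/a)^b with index [(ℤ/a)^b : F] ≤ C. Then there exists a subgroup F' ≤ F isomorphic to (ℤ/a')^b for some natural number a' with C!·a' ≥ a. -/
/-!
Let `n = [G : F]` and `g = gcd(a, n)`. Every element of `G = (ℤ/a)^b` is killed by `a`, and
`n • G ≤ F`, so by Bézout `g • G ≤ F`. The subgroup `g • G` is the image of `(ℤ/(a/g))^b` under
coordinatewise multiplication by `g`, an injective map, and `a = g · (a/g)` with `g ≤ n ≤ C ≤ C!`.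
-/

section zmodHom

variable {A : Type*} [AddGroup A] (x : A)

noncomputable def zmodAddOrderOfHom : ZMod (addOrderOf x) →+ A :=
  ZMod.lift _ ⟨zmultiplesHom A x, by simp [addOrderOf_nsmul_eq_zero]⟩

theorem zmodAddOrderOfHom_apply (k : ZMod (addOrderOf x)) :
    zmodAddOrderOfHom x k = (k.cast : ℤ) • x := by
  conv_lhs => rw [← ZMod.intCast_zmod_cast k]
  rw [zmodAddOrderOfHom, ZMod.lift_coe]
  rfl

theorem zmodAddOrderOfHom_injective : Function.Injective (zmodAddOrderOfHom x) :=
  (ZMod.lift_injective _).2 fun m hm => by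
    rwa [ZMod.intCast_zmod_eq_zero_iff_dvd, addOrderOf_dvd_iff_zsmul_eq_zero]

end zmodHom

theorem AddSubgroup.gcd_index_nsmul_mem {G : Type*} [AddCommGroup G] (H : AddSubgroup G) {a : ℕ}
    {x : G} (hx : a • x = 0) : Nat.gcd a H.index • x ∈ H := by
  have hgcd : (Nat.gcd a H.index : ℤ) =
      a * Nat.gcdA a H.index + H.index * Nat.gcdB a H.index :=
    Nat.gcd_eq_gcd_ab a H.index
  rw [← natCast_zsmul, hgcd, add_zsmul, mul_comm, mul_zsmul, natCast_zsmul, hx, zsmul_zero,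
    zero_add, mul_comm, mul_zsmul, natCast_zsmul]
  exact H.zsmul_mem (H.nsmul_index_mem x) _

/-- If `F` is a subgroup of `(ℤ/a)^b` of index at most `C`, then `F` contains a subgroup
isomorphic to `(ℤ/a')^b` for some `a'` with `C! · a' ≥ a`. -/
theorem stmt_3 (a b C : ℕ) (F : AddSubgroup (Fin b → ZMod a)) (hF : F.index ≤ C) :
    ∃ a' : ℕ, a ≤ C.factorial * a' ∧
      ∃ F' : AddSubgroup (Fin b → ZMod a), F' ≤ F ∧ Nonempty (F' ≃+ (Fin b → ZMod a')) := by
  rcases eq_or_ne a 0 with rfl | ha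
  · exact ⟨1, Nat.zero_le _, ⊥, bot_le, ⟨AddEquiv.ofUnique⟩⟩
  have : NeZero a := ⟨ha⟩
  set g := Nat.gcd a F.index
  have hg : g ≤ C.factorial :=
    (Nat.le_of_dvd (Nat.pos_of_ne_zero F.index_ne_zero_of_finite) (Nat.gcd_dvd_right _ _)).trans
      (hF.trans C.self_le_factorial)
  have hord : addOrderOf (g : ZMod a) = a / g := by
    rw [ZMod.addOrderOf_coe _ ha, Nat.gcd_eq_right (Nat.gcd_dvd_left _ _)]
  let ψ := (zmodAddOrderOfHom (g : ZMod a)).compLeft (Fin b)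
  have hψ : Function.Injective ψ := (zmodAddOrderOfHom_injective _).comp_left
  refine ⟨addOrderOf (g : ZMod a), ?_, ψ.range, ?_, ⟨(AddMonoidHom.ofInjective hψ).symm⟩⟩
  · rw [hord]
    calc a = g * (a / g) := (Nat.mul_div_cancel' (Nat.gcd_dvd_left _ _)).symm
      _ ≤ C.factorial * (a / g) := Nat.mul_le_mul_right _ hg
  · rintro _ ⟨y, rfl⟩
    have hψy : ψ y = g • fun i => (((y i).cast : ℤ) : ZMod a) := by
      funext i
      simp [ψ, zmodAddOrderOfHom_apply, mul_comm]
    rw [hψy]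
    exact F.gcd_index_nsmul_mem (by funext i; simp)
end

section
/- The group with presentation ⟨a, b | [a, b²] = 1, [a², b] = 1⟩ is isomorphic to the semidirect product ℤ² ⋊_φ ℤ where φ(1) is the coordinate-swap matrix [[0,1],[1,0]]. -/
/-!
In any group, `a` and `b` satisfy `[a, b²] = [a², b] = 1` exactly when `c = ab` and `d = ba`
commute and conjugation by `a` swaps them; conversely `b` is recovered as `d a⁻¹`. In `ℤ² ⋊ ℤ`
the generator of `ℤ` and the two basis vectors of `ℤ²` form such a triple `(a, c, d)`, and every
such triple in a group `G` defines a homomorphism `ℤ² ⋊ ℤ → G`, because `v ↦ c ^ v₀ * d ^ v₁`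
intertwines the coordinate swap with conjugation by `a`. The homomorphisms obtained in both
directions are mutually inverse, as one checks on generators.
-/

/-- The coordinate-swap automorphism of `ℤ²` (written multiplicatively). -/
def swapAut : MulAut (Multiplicative (Fin 2 → ℤ)) where
  toFun v := Multiplicative.ofAdd (fun i => Multiplicative.toAdd v (Equiv.swap (0 : Fin 2) 1 i))
  invFun v := Multiplicative.ofAdd (fun i => Multiplicative.toAdd v (Equiv.swap (0 : Fin 2) 1 i))
  left_inv v := by
    apply Multiplicative.toAdd.injective
    funext i
    simp
  right_inv v := by
    apply Multiplicative.toAdd.injective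
    funext i
    simp
  map_mul' v w := by
    apply Multiplicative.toAdd.injective
    funext i
    simp

/-- The homomorphism `ℤ → Aut(ℤ²)` sending `1` to the coordinate swap `[[0,1],[1,0]]`. -/
def φ8 : Multiplicative ℤ →* MulAut (Multiplicative (Fin 2 → ℤ)) :=
  zpowersHom _ swapAut

open scoped commutatorElement

/-- The relations `[a, b²] = 1` and `[a², b] = 1` on two generators. -/
def rels8 : Set (FreeGroup (Fin 2)) :=
  {⁅FreeGroup.of (0 : Fin 2), (FreeGroup.of (1 : Fin 2)) ^ 2⁆, ⁅(FreeGroup.of (0 : Fin 2)) ^ 2, FreeGroup.of (1 : Fin 2)⁆}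

open Multiplicative SemidirectProduct

theorem Function.Semiconj.mulAut_zpow {H K : Type*} [Group H] [Group K] {f : H → K}
    {σ : MulAut H} {τ : MulAut K} (h : Function.Semiconj f σ τ) (n : ℤ) :
    Function.Semiconj f ⇑(σ ^ n) ⇑(τ ^ n) := by
  have h_inv : Function.Semiconj f ⇑σ⁻¹ ⇑τ⁻¹ :=
    h.inverses_right (σ.apply_inv_self) (τ.inv_apply_self)
  induction n using Int.induction_on with
  | zero => exact Function.Semiconj.id_right
  | succ n ih =>
    rw [zpow_add_one, zpow_add_one, MulAut.coe_mul, MulAut.coe_mul]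
    exact ih.comp_right h
  | pred n ih =>
    rw [zpow_sub_one, zpow_sub_one, MulAut.coe_mul, MulAut.coe_mul]
    exact ih.comp_right h_inv

section SwapTriple

variable {G : Type*} [Group G]

structure IsSwapTriple (a c d : G) : Prop where
  commute : Commute c d
  conj_left : a * c * a⁻¹ = d
  conj_right : a * d * a⁻¹ = c

theorem isSwapTriple_mul_mul {a b : G} (h₁ : Commute a (b ^ 2)) (h₂ : Commute (a ^ 2) b) :
    IsSwapTriple a (a * b) (b * a) := by
  rw [sq] at h₁ h₂
  refine ⟨?_, ?_, by group⟩
  · calc a * b * (b * a) = a * (b * b) * a := by group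
      _ = b * b * (a * a) := by rw [h₁.eq]; group
      _ = b * (a * a * b) := by rw [h₂.eq]; group
      _ = b * a * (a * b) := by group
  · calc a * (a * b) * a⁻¹ = a * a * b * a⁻¹ := by group
      _ = b * a := by rw [h₂.eq]; group

theorem IsSwapTriple.commute_sq_mul_inv {a c d : G} (h : IsSwapTriple a c d) :
    Commute a ((d * a⁻¹) ^ 2) ∧ Commute (a ^ 2) (d * a⁻¹) := by
  have hd : a * d = c * a := by rw [← h.conj_right]; group
  have hc : a * c = d * a := by rw [← h.conj_left]; group
  have hd' : a⁻¹ * d = c * a⁻¹ := by rw [← h.conj_left]; group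
  rw [sq, sq]
  constructor
  · calc a * (d * a⁻¹ * (d * a⁻¹)) = a * d * (a⁻¹ * d) * a⁻¹ := by group
      _ = c * d * a⁻¹ := by rw [hd, hd', mul_assoc c a, ← mul_assoc a c, h.conj_left]
      _ = d * a⁻¹ * (d * a⁻¹) * a := by rw [h.commute.eq, mul_assoc d, ← hd']; group
  · calc a * a * (d * a⁻¹) = a * (a * d) * a⁻¹ := by group
      _ = d * a⁻¹ * (a * a) := by rw [hd, ← mul_assoc, hc]; group

end SwapTriple

def unitVec (i : Fin 2) : Multiplicative (Fin 2 → ℤ) := ofAdd (Pi.single i 1)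

theorem eq_unitVec_zpow_mul (v : Multiplicative (Fin 2 → ℤ)) :
    v = unitVec 0 ^ toAdd v 0 * unitVec 1 ^ toAdd v 1 := by
  apply toAdd.injective
  funext i
  fin_cases i <;> simp [unitVec]

theorem hom_ext_unitVec {M : Type*} [Group M] {f g : Multiplicative (Fin 2 → ℤ) →* M}
    (h₀ : f (unitVec 0) = g (unitVec 0)) (h₁ : f (unitVec 1) = g (unitVec 1)) : f = g := by
  refine MonoidHom.ext fun v => ?_
  rw [eq_unitVec_zpow_mul v, map_mul, map_mul, map_zpow, map_zpow, map_zpow, map_zpow, h₀, h₁]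

theorem swapAut_unitVec (i : Fin 2) : swapAut (unitVec i) = unitVec (Equiv.swap 0 1 i) := by
  apply toAdd.injective
  funext j
  simp [swapAut, unitVec, Pi.single_apply, Equiv.swap_apply_eq_iff]

theorem φ8_apply (g : Multiplicative ℤ) : φ8 g = swapAut ^ toAdd g := rfl

section Lift

variable {G : Type*} [Group G]

def commuteHom {c d : G} (h : Commute c d) : Multiplicative (Fin 2 → ℤ) →* G :=
  MonoidHom.mk' (fun v => c ^ toAdd v 0 * d ^ toAdd v 1) fun v w => by
    simp only [toAdd_mul, Pi.add_apply, zpow_add]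
    exact ((h.zpow_zpow _ _).symm.mul_mul_mul_comm _ _).symm

@[simp]
theorem commuteHom_unitVec_zero {c d : G} (h : Commute c d) : commuteHom h (unitVec 0) = c := by
  simp [commuteHom, unitVec]

@[simp]
theorem commuteHom_unitVec_one {c d : G} (h : Commute c d) : commuteHom h (unitVec 1) = d := by
  simp [commuteHom, unitVec]

theorem IsSwapTriple.semiconj_commuteHom {a c d : G} (h : IsSwapTriple a c d) :
    Function.Semiconj (commuteHom h.commute) swapAut (MulAut.conj a) := by
  have := hom_ext_unitVec (f := (commuteHom h.commute).comp swapAut.toMonoidHom)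
    (g := (MulAut.conj a).toMonoidHom.comp (commuteHom h.commute))
    (by simp [swapAut_unitVec, h.conj_left]) (by simp [swapAut_unitVec, h.conj_right])
  exact fun v => DFunLike.congr_fun this v

def IsSwapTriple.lift {a c d : G} (h : IsSwapTriple a c d) :
    Multiplicative (Fin 2 → ℤ) ⋊[φ8] Multiplicative ℤ →* G :=
  SemidirectProduct.lift (commuteHom h.commute) (zpowersHom G a) fun g => by
    refine MonoidHom.ext fun v => ?_
    simpa [φ8_apply, zpowersHom_apply, map_zpow] using
      h.semiconj_commuteHom.mulAut_zpow (toAdd g) v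

@[simp]
theorem IsSwapTriple.lift_inl {a c d : G} (h : IsSwapTriple a c d)
    (v : Multiplicative (Fin 2 → ℤ)) : h.lift (inl v) = commuteHom h.commute v :=
  SemidirectProduct.lift_inl ..

@[simp]
theorem IsSwapTriple.lift_inr {a c d : G} (h : IsSwapTriple a c d)
    (g : Multiplicative ℤ) : h.lift (inr g) = a ^ toAdd g :=
  SemidirectProduct.lift_inr ..

end Lift

theorem isSwapTriple_inr_inl_inl :
    IsSwapTriple (inr (ofAdd 1) : Multiplicative (Fin 2 → ℤ) ⋊[φ8] Multiplicative ℤ)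
      (inl (unitVec 0)) (inl (unitVec 1)) := by
  refine ⟨(Commute.all _ _).map inl, ?_, ?_⟩ <;>
    simp [← map_inv, ← inl_aut, φ8_apply, swapAut_unitVec]

theorem forall_mem_rels8_eq_one_iff {G : Type*} [Group G] (f : FreeGroup (Fin 2) →* G) :
    (∀ r ∈ rels8, f r = 1) ↔
      Commute (f (.of 0)) (f (.of 1) ^ 2) ∧ Commute (f (.of 0) ^ 2) (f (.of 1)) := by
  simp [rels8, map_commutatorElement, commutatorElement_eq_one_iff_commute]

theorem commute_presentedGroup_of :
    Commute (.of 0 : PresentedGroup rels8) (.of 1 ^ 2) ∧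
      Commute (.of 0 ^ 2 : PresentedGroup rels8) (.of 1) :=
  (forall_mem_rels8_eq_one_iff (PresentedGroup.mk rels8)).1 fun _ => PresentedGroup.one_of_mem

def presentedGroupEquiv :
    PresentedGroup rels8 ≃* Multiplicative (Fin 2 → ℤ) ⋊[φ8] Multiplicative ℤ :=
  MonoidHom.toMulEquiv
    (PresentedGroup.toGroup (f := ![inr (ofAdd 1), inl (unitVec 1) * (inr (ofAdd 1))⁻¹])
      ((forall_mem_rels8_eq_one_iff _).2
        (by simpa using isSwapTriple_inr_inl_inl.commute_sq_mul_inv)))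
    (isSwapTriple_mul_mul commute_presentedGroup_of.1 commute_presentedGroup_of.2).lift
    (PresentedGroup.ext fun i => by fin_cases i <;> simp)
    (SemidirectProduct.hom_ext
      (hom_ext_unitVec (by simp [← mul_assoc, isSwapTriple_inr_inl_inl.conj_right]) (by simp))
      (MonoidHom.ext_mint (by simp)))

/-- The group `⟨a, b | [a,b²] = 1, [a²,b] = 1⟩` is isomorphic to the semidirect product
`ℤ² ⋊_φ ℤ` where `φ(1)` is the coordinate swap `[[0,1],[1,0]]`. -/
theorem stmt_8 :
    Nonempty (PresentedGroup rels8 ≃*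
      ((Multiplicative (Fin 2 → ℤ)) ⋊[φ8] Multiplicative ℤ)) :=
  ⟨presentedGroupEquiv⟩
end

section
/- Let Γ₁, …, Γₘ be torsion-free groups such that for every index j and every non-trivial element γ ∈ Γ_j, the centralizer C_{Γ_j}(γ) is infinite cyclic, and such that each Γ_j is not isomorphic to ℤ and contains no non-trivial normal abelian subgroup of the form ℤ. Then every automorphism f of Γ = Γ₁ × ⋯ × Γₘ permutes the factors: there is a permutation σ of {1,…,m} with f(Γ_j) = Γ_{σ(j)} for all j. -/
/-- A monoid is torsion-free if no nontrivial elements have finite order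
(the December 2024 Mathlib definition, since removed). -/
def Monoid.IsTorsionFree (G : Type*) [Monoid G] : Prop :=
  ∀ g : G, g ≠ 1 → ¬IsOfFinOrder g

/-!
For `g ≠ 1` in `∏ Γᵢ`, the double centralizer `C(C(g))` contains `Pi.mulSingle i (g i)` for every
`i` in the support of `g`; by torsion-freeness two such elements with distinct `i` never lie in a
common cyclic group. Conversely, since a central `z ≠ 1` would give `Γᵢ = C(z) ≅ ℤ`, the factors
are centerless, so `C(C(Pi.mulSingle k γ))` sits inside the copy of `C(γ)` in the `k`-th factor,
which is cyclic. Thus `g ≠ 1` lies in a single factor iff `C(C(g))` is cyclic, a property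
preserved by automorphisms. A subgroup whose elements each lie in a single factor lies in one
factor, so `f` maps each non-trivial factor into a factor, and `f⁻¹` maps it back.
-/

open Subgroup

section Centralizer

variable {G H : Type*} [Group G] [Group H]

theorem Subgroup.map_centralizer_mulEquiv (f : G ≃* H) (s : Set G) :
    (centralizer s).map f.toMonoidHom = centralizer (f '' s) := by
  refine le_antisymm (map_centralizer_le_centralizer_image s _) fun x hx => ?_
  refine ⟨f.symm x, fun y hy => f.injective ?_, f.apply_symm_apply x⟩
  simpa using hx (f y) ⟨y, hy, rfl⟩

theorem isCyclic_centralizer_centralizer_apply (f : G ≃* H) {g : G}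
    (hg : IsCyclic (centralizer (centralizer {g} : Set G))) :
    IsCyclic (centralizer (centralizer {f g} : Set H)) := by
  have hmap : centralizer (centralizer {f g} : Set H) =
      (centralizer (centralizer {g} : Set G)).map f.toMonoidHom := by
    rw [map_centralizer_mulEquiv, ← MulEquiv.coe_toMonoidHom, ← coe_map,
      map_centralizer_mulEquiv, Set.image_singleton]
    rfl
  rw [hmap]
  exact (f.subgroupMap _).isCyclic.mp hg

theorem Subgroup.center_eq_bot_of_forall_centralizer_mulEquiv {A : Type*} [Group A]
    (hcent : ∀ γ : G, γ ≠ 1 → Nonempty (centralizer {γ} ≃* A)) (hG : ¬Nonempty (G ≃* A)) :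
    center G = ⊥ := by
  refine eq_bot_iff.mpr fun z hz => Subgroup.mem_bot.mpr ?_
  by_contra hz1
  obtain ⟨e⟩ := hcent z hz1
  have htop : centralizer {z} = ⊤ := centralizer_eq_top_iff_subset.mpr (by simpa using hz)
  exact hG ⟨topEquiv.symm.trans ((MulEquiv.subgroupCongr htop).symm.trans e)⟩

theorem exists_zpow_eq_zpow_of_mem_zpowers {a b c : G} (ha : a ∈ zpowers c)
    (hb : b ∈ zpowers c) (ha1 : a ≠ 1) : ∃ n : ℤ, n ≠ 0 ∧ ∃ m : ℤ, b ^ n = a ^ m := by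
  obtain ⟨p, rfl⟩ := mem_zpowers_iff.mp ha
  obtain ⟨q, rfl⟩ := mem_zpowers_iff.mp hb
  refine ⟨p, fun hp => ha1 (by simp [hp]), q, ?_⟩
  rw [← zpow_mul, ← zpow_mul, mul_comm]

end Centralizer

section Pi

variable {I : Type*} [DecidableEq I] {Γ : I → Type*} [∀ i, Group (Γ i)]

theorem mem_range_mulSingle_iff {k : I} {x : ∀ i, Γ i} :
    x ∈ (MonoidHom.mulSingle Γ k).range ↔ ∀ i ≠ k, x i = 1 := by
  constructor
  · rintro ⟨γ, rfl⟩ i hi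
    exact Pi.mulSingle_eq_of_ne hi γ
  · intro h
    refine ⟨x k, funext fun i => ?_⟩
    by_cases hi : i = k
    · subst hi
      simp
    · simp [hi, h i hi]

theorem eq_of_range_mulSingle_le {j k : I} [Nontrivial (Γ j)]
    (hle : (MonoidHom.mulSingle Γ j).range ≤ (MonoidHom.mulSingle Γ k).range) : j = k := by
  obtain ⟨γ, hγ⟩ := exists_ne (1 : Γ j)
  by_contra hjk
  exact hγ (by simpa using mem_range_mulSingle_iff.mp (hle ⟨γ, rfl⟩) j hjk)

theorem range_mulSingle_eq_bot_iff {k : I} :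
    (MonoidHom.mulSingle Γ k).range = ⊥ ↔ Subsingleton (Γ k) := by
  rw [MonoidHom.range_eq_bot_iff]
  refine ⟨fun h => subsingleton_of_forall_eq 1 fun γ => ?_, fun _ => ?_⟩
  · simpa using DFunLike.congr_fun h γ
  · ext γ : 1
    simp [Subsingleton.elim γ 1]

theorem mulSingle_apply_mem_centralizer_centralizer (g : ∀ i, Γ i) (j : I) :
    Pi.mulSingle j (g j) ∈ centralizer (centralizer {g} : Set (∀ i, Γ i)) := by
  intro y hy
  have hyg : g * y = y * g := hy g rfl
  funext i
  by_cases hi : i = j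
  · subst hi
    simpa using (congrFun hyg i).symm
  · simp [hi]

theorem not_isCyclic_centralizer_centralizer (htf : ∀ i, Monoid.IsTorsionFree (Γ i))
    {g : ∀ i, Γ i} {j k : I} (hjk : j ≠ k) (hj : g j ≠ 1) (hk : g k ≠ 1) :
    ¬IsCyclic (centralizer (centralizer {g} : Set (∀ i, Γ i))) := by
  intro hcyc
  obtain ⟨c, hc⟩ := (Subgroup.isCyclic_iff_exists_zpowers_eq_top _).mp hcyc
  have hj' := mulSingle_apply_mem_centralizer_centralizer g j
  have hk' := mulSingle_apply_mem_centralizer_centralizer g k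
  rw [← hc] at hj' hk'
  obtain ⟨n, hn, m, hnm⟩ :=
    exists_zpow_eq_zpow_of_mem_zpowers hj' hk' (by simpa using hj)
  refine htf k (g k) hk (isOfFinOrder_iff_zpow_eq_one.mpr ⟨n, hn, ?_⟩)
  simpa [Pi.mulSingle_eq_of_ne hjk.symm] using congrFun hnm k

theorem centralizer_centralizer_mulSingle_le (hcenter : ∀ i, center (Γ i) = ⊥) (k : I)
    (γ : Γ k) :
    centralizer (centralizer {Pi.mulSingle k γ} : Set (∀ i, Γ i)) ≤
      (centralizer {γ}).map (MonoidHom.mulSingle Γ k) := by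
  intro y hy
  have hcomm : ∀ h ∈ centralizer {Pi.mulSingle k γ}, h * y = y * h := hy
  have hy_off : ∀ i ≠ k, y i = 1 := by
    intro i hi
    have hyi : y i ∈ center (Γ i) := mem_center_iff.mpr fun a => by
      have hmem : Pi.mulSingle i a ∈ centralizer {Pi.mulSingle k γ} :=
        mem_centralizer_singleton_iff.mpr (Pi.mulSingle_commute hi a γ).eq
      simpa using congrFun (hcomm _ hmem) i
    simpa [hcenter i] using hyi
  obtain ⟨z, rfl⟩ := mem_range_mulSingle_iff.mpr hy_off
  refine ⟨z, mem_centralizer_singleton_iff.mpr ?_, rfl⟩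
  simpa using (congrFun (hcomm _ (mem_centralizer_singleton_iff.mpr rfl)) k).symm

theorem isCyclic_centralizer_centralizer_iff (htf : ∀ i, Monoid.IsTorsionFree (Γ i))
    (hcyc : ∀ i (γ : Γ i), γ ≠ 1 → IsCyclic (centralizer {γ}))
    (hcenter : ∀ i, center (Γ i) = ⊥) {g : ∀ i, Γ i} (hg : g ≠ 1) :
    IsCyclic (centralizer (centralizer {g} : Set (∀ i, Γ i))) ↔
      ∃ k, g ∈ (MonoidHom.mulSingle Γ k).range := by
  constructor
  · intro h
    obtain ⟨k, hk⟩ : ∃ k, g k ≠ 1 := by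
      by_contra! hg1
      exact hg (funext hg1)
    refine ⟨k, mem_range_mulSingle_iff.mpr fun i hi => ?_⟩
    by_contra hgi
    exact not_isCyclic_centralizer_centralizer htf hi hgi hk h
  · rintro ⟨k, γ, rfl⟩
    have := hcyc k γ (by rintro rfl; simp at hg)
    have : IsCyclic ((centralizer {γ}).map (MonoidHom.mulSingle Γ k)) :=
      isCyclic_of_surjective _ (MonoidHom.subgroupMap_surjective _ _)
    exact isCyclic_of_le (centralizer_centralizer_mulSingle_le hcenter k γ)

theorem exists_apply_mem_range_mulSingle (htf : ∀ i, Monoid.IsTorsionFree (Γ i))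
    (hcyc : ∀ i (γ : Γ i), γ ≠ 1 → IsCyclic (centralizer {γ}))
    (hcenter : ∀ i, center (Γ i) = ⊥) (f : (∀ i, Γ i) ≃* (∀ i, Γ i)) {x : ∀ i, Γ i} {k : I}
    (hx : x ∈ (MonoidHom.mulSingle Γ k).range) :
    ∃ l, f x ∈ (MonoidHom.mulSingle Γ l).range := by
  by_cases hx1 : x = 1
  · exact ⟨k, by simp [hx1, one_mem]⟩
  have hfx1 : f x ≠ 1 := (map_ne_one_iff f f.injective).mpr hx1
  rw [← isCyclic_centralizer_centralizer_iff htf hcyc hcenter hfx1]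
  exact isCyclic_centralizer_centralizer_apply f
    ((isCyclic_centralizer_centralizer_iff htf hcyc hcenter hx1).mpr ⟨k, hx⟩)

theorem exists_le_range_mulSingle [Nonempty I] {K : Subgroup (∀ i, Γ i)}
    (hK : ∀ x ∈ K, ∃ k, x ∈ (MonoidHom.mulSingle Γ k).range) :
    ∃ k, K ≤ (MonoidHom.mulSingle Γ k).range := by
  obtain rfl | ⟨a, haK, ha1⟩ := K.bot_or_exists_ne_one
  · exact ⟨Classical.arbitrary I, bot_le⟩
  obtain ⟨k, hak⟩ := hK a haK
  rw [mem_range_mulSingle_iff] at hak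
  have hak1 : a k ≠ 1 := fun h => ha1 (funext fun i => by
    by_cases hi : i = k
    · subst hi; exact h
    · exact hak i hi)
  refine ⟨k, fun x hx => ?_⟩
  obtain ⟨r, hxr⟩ := hK x hx
  obtain ⟨l, hxal⟩ := hK (x * a) (mul_mem hx haK)
  rw [mem_range_mulSingle_iff] at hxr hxal ⊢
  by_cases hrk : r = k
  · exact hrk ▸ hxr
  -- `(x * a) k = a k ≠ 1` forces `l = k`, and then `(x * a) r = x r` must be trivial.
  have hlk : l = k := by
    by_contra hlk
    have := hxal k (Ne.symm hlk)
    simp [hxr k (Ne.symm hrk)] at this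
    exact hak1 this
  intro i hi
  by_cases hir : i = r
  · subst hir
    simpa [hak i hi] using hxal i (hlk ▸ hi)
  · exact hxr i hir

theorem exists_map_range_mulSingle_eq (htf : ∀ i, Monoid.IsTorsionFree (Γ i))
    (hcyc : ∀ i (γ : Γ i), γ ≠ 1 → IsCyclic (centralizer {γ}))
    (hcenter : ∀ i, center (Γ i) = ⊥) (f : (∀ i, Γ i) ≃* (∀ i, Γ i)) (j : I)
    [Nontrivial (Γ j)] :
    ∃ k, Nontrivial (Γ k) ∧
      (MonoidHom.mulSingle Γ j).range.map f.toMonoidHom = (MonoidHom.mulSingle Γ k).range := by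
  have : Nonempty I := ⟨j⟩
  have hle (e : (∀ i, Γ i) ≃* (∀ i, Γ i)) (i : I) :
      ∃ k, (MonoidHom.mulSingle Γ i).range.map e.toMonoidHom ≤ (MonoidHom.mulSingle Γ k).range :=
    exists_le_range_mulSingle <| by
      rintro _ ⟨x, hx, rfl⟩
      exact exists_apply_mem_range_mulSingle htf hcyc hcenter e hx
  obtain ⟨k, hk⟩ := hle f j
  obtain ⟨j', hj'⟩ := hle f.symm k
  rw [map_le_iff_le_comap, comap_equiv_eq_map_symm', MulEquiv.symm_symm] at hj'
  have hjj' : (MonoidHom.mulSingle Γ j).range ≤ (MonoidHom.mulSingle Γ j').range := by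
    rw [← map_le_map_iff_of_injective (f := f.toMonoidHom) f.injective]
    exact hk.trans hj'
  obtain rfl := eq_of_range_mulSingle_le hjj'
  refine ⟨k, ?_, hk.antisymm hj'⟩
  by_contra hk1
  rw [not_nontrivial_iff_subsingleton, ← range_mulSingle_eq_bot_iff] at hk1
  rw [hk1, le_bot_iff, map_eq_bot_iff_of_injective _ f.injective,
    range_mulSingle_eq_bot_iff] at hk
  exact not_subsingleton _ hk

theorem exists_perm_map_range_mulSingle_eq [Finite I] (htf : ∀ i, Monoid.IsTorsionFree (Γ i))
    (hcyc : ∀ i (γ : Γ i), γ ≠ 1 → IsCyclic (centralizer {γ}))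
    (hcenter : ∀ i, center (Γ i) = ⊥) (f : (∀ i, Γ i) ≃* (∀ i, Γ i)) :
    ∃ σ : Equiv.Perm I, ∀ j,
      (MonoidHom.mulSingle Γ j).range.map f.toMonoidHom = (MonoidHom.mulSingle Γ (σ j)).range := by
  classical
  choose t ht using fun j : {j // Nontrivial (Γ j)} =>
    have := j.2
    exists_map_range_mulSingle_eq htf hcyc hcenter f j.1
  let τ (j : {j // Nontrivial (Γ j)}) : {j // Nontrivial (Γ j)} := ⟨t j, (ht j).1⟩
  have hτ : Function.Injective τ := by
    intro a b hab
    have := a.2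
    have hab' : t a = t b := congrArg Subtype.val hab
    have hrange := map_injective (f := f.toMonoidHom) f.injective
      ((ht a).2.trans (hab' ▸ (ht b).2.symm))
    exact Subtype.ext (eq_of_range_mulSingle_le hrange.le)
  refine ⟨.ofSubtype (.ofBijective τ (Finite.injective_iff_bijective.mp hτ)), fun j => ?_⟩
  by_cases hj : Nontrivial (Γ j)
  · rw [Equiv.Perm.ofSubtype_apply_of_mem (p := fun j => Nontrivial (Γ j)) _ hj]
    exact (ht ⟨j, hj⟩).2
  · rw [Equiv.Perm.ofSubtype_apply_of_not_mem (p := fun j => Nontrivial (Γ j)) _ hj]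
    rw [not_nontrivial_iff_subsingleton, ← range_mulSingle_eq_bot_iff] at hj
    rw [hj, Subgroup.map_bot]

end Pi

theorem stmt_10_general (m : ℕ) (Γ : Fin m → Type*) [∀ j, Group (Γ j)]
    (htf : ∀ j, Monoid.IsTorsionFree (Γ j))
    (hcent : ∀ j (γ : Γ j), γ ≠ 1 →
      Nonempty ((Subgroup.centralizer {γ}) ≃* Multiplicative ℤ))
    (hnotZ : ∀ j, ¬ Nonempty (Γ j ≃* Multiplicative ℤ))
    (f : (∀ j, Γ j) ≃* (∀ j, Γ j)) :
    ∃ σ : Equiv.Perm (Fin m), ∀ j,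
      ((MonoidHom.mulSingle Γ j).range).map f.toMonoidHom =
        (MonoidHom.mulSingle Γ (σ j)).range := by
  have hcyc (j) (γ : Γ j) (hγ : γ ≠ 1) : IsCyclic (centralizer {γ}) :=
    let ⟨e⟩ := hcent j γ hγ
    e.isCyclic.mpr inferInstance
  have hcenter (j) : center (Γ j) = ⊥ :=
    center_eq_bot_of_forall_centralizer_mulEquiv (hcent j) (hnotZ j)
  exact exists_perm_map_range_mulSingle_eq htf hcyc hcenter f

/-- Let `Γ₁, …, Γₘ` be torsion-free groups in which centralizers of non-trivial elements are
infinite cyclic, no `Γ_j` is isomorphic to `ℤ`, and no `Γ_j` has a non-trivial normal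
subgroup isomorphic to `ℤ`. Then every automorphism of `Γ₁ × ⋯ × Γₘ` permutes the factors. -/
theorem stmt_10 (m : ℕ) (Γ : Fin m → Type*) [∀ j, Group (Γ j)]
    (htf : ∀ j, Monoid.IsTorsionFree (Γ j))
    (hcent : ∀ j (γ : Γ j), γ ≠ 1 →
      Nonempty ((Subgroup.centralizer {γ}) ≃* Multiplicative ℤ))
    (hnotZ : ∀ j, ¬ Nonempty (Γ j ≃* Multiplicative ℤ))
    (hnoNormalZ : ∀ j (N : Subgroup (Γ j)), N.Normal → ¬ Nonempty (N ≃* Multiplicative ℤ))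
    (f : (∀ j, Γ j) ≃* (∀ j, Γ j)) :
    ∃ σ : Equiv.Perm (Fin m), ∀ j,
      ((MonoidHom.mulSingle Γ j).range).map f.toMonoidHom =
        (MonoidHom.mulSingle Γ (σ j)).range :=
  stmt_10_general m Γ htf hcent hnotZ f
end

section
/- Let G be a group and suppose there is a constant C such that every finite subgroup F ≤ G has a homomorphism ψ_F : F → O (for a fixed Minkowski group O with constant C) whose kernel embeds into a torus, i.e., ker ψ_F is isomorphic to a subgroup of (ℝ/ℤ)^k. Then every finite subgroup F of G that is of the form (ℤ/a)^b with b > k satisfies a ≤ C!·C. -/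
/-!
The kernel `K` of `ψ_F` has index at most `C`, since the image of `ψ_F` is a finite subgroup
of `O`. As `F ≅ (ℤ/a)^b` has exponent dividing `a`, the torus embedding sends `K` into the
`a`-torsion of `(ℝ/ℤ)^k`, which has at most `a^k` points. Hence `a^b = |K| · [F : K] ≤ a^k · C`,
and `b > k` gives `a ≤ C ≤ C! · C`.
-/

open Set Function

theorem AddCircle.encard_pi_torsion_le {𝕜 : Type*} [AddCommGroup 𝕜] [IsAddTorsionFree 𝕜]
    (p : 𝕜) (ι : Type*) [Fintype ι] {n : ℕ} (hn : n ≠ 0) :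
    {w : ι → AddCircle p | n • w = 0}.encard ≤ n ^ Fintype.card ι := by
  have hpi : {w : ι → AddCircle p | n • w = 0} = univ.pi fun _ ↦ {x | n • x = 0} := by
    ext w; simp [funext_iff]
  rw [hpi, encard_pi_eq_prod_encard]
  exact Finset.prod_le_pow_card _ _ _ fun _ _ ↦
    AddCircle.card_torsion_le_of_isSMulRegular p n hn (.of_ne_zero hn)

theorem AddCircle.card_le_of_injective_pi {𝕜 : Type*} [AddCommGroup 𝕜] [IsAddTorsionFree 𝕜]
    {p : 𝕜} {ι : Type*} [Fintype ι] {H : Type*} [Group H] {n : ℕ} (hn : n ≠ 0)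
    (hH : ∀ x : H, x ^ n = 1) (f : H →* Multiplicative (ι → AddCircle p)) (hf : Injective f) :
    Nat.card H ≤ n ^ Fintype.card ι := by
  let g : H → {w : ι → AddCircle p | n • w = 0} := fun x ↦
    ⟨(f x).toAdd, by rw [mem_ofPred_eq, ← toAdd_pow, ← map_pow, hH, map_one, toAdd_one]⟩
  have hg : Injective g := fun x y hxy ↦
    hf (Multiplicative.toAdd.injective (congrArg Subtype.val hxy))
  have hle : ENat.card H ≤ (n ^ Fintype.card ι : ℕ) := by
    push_cast
    exact (ENat.card_le_card_of_injective hg).trans (encard_pi_torsion_le p ι hn)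
  have : Finite H := ENat.card_lt_top.mp (hle.trans_lt (ENat.natCast_lt_top _))
  exact_mod_cast (ENat.card_eq_coe_natCard H).symm.trans_le hle

theorem MonoidHom.index_ker_le {H O : Type*} [Group H] [Group O] [Finite H] {C : ℕ}
    (hO : ∀ F : Subgroup O, Finite F → Nat.card F ≤ C) (ψ : H →* O) : ψ.ker.index ≤ C := by
  rw [Subgroup.index_ker]
  exact hO ψ.range (Finite.of_surjective _ ψ.rangeRestrict_surjective)

theorem Nat.le_of_pow_le_pow_mul {a k b C : ℕ} (ha : a ≠ 0) (hkb : k < b)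
    (h : a ^ b ≤ a ^ k * C) : a ≤ C := by
  refine Nat.le_of_mul_le_mul_left ?_ (pow_pos (Nat.pos_of_ne_zero ha) k)
  calc a ^ k * a = a ^ (k + 1) := (pow_succ a k).symm
    _ ≤ a ^ b := Nat.pow_le_pow_right (Nat.pos_of_ne_zero ha) hkb
    _ ≤ a ^ k * C := h

/-- Suppose every finite subgroup `F` of `G` admits a homomorphism `ψ_F` to a fixed group `O`
whose finite subgroups all have order at most `C`, with `ker ψ_F` embedding into the torus
`(ℝ/ℤ)^k`. Then any finite subgroup of `G` of the form `(ℤ/a)^b` with `b > k` satisfies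
`a ≤ C! · C`. -/
theorem stmt_12 {G O : Type*} [Group G] [Group O] (C k : ℕ)
    (hO : ∀ F : Subgroup O, Finite F → Nat.card F ≤ C)
    (h : ∀ F : Subgroup G, Finite F → ∃ ψ : F →* O,
      ∃ f : ψ.ker →* Multiplicative (Fin k → AddCircle (1 : ℝ)), Function.Injective f)
    (F : Subgroup G) (hF : Finite F) (a b : ℕ) (hb : b > k)
    (hiso : Nonempty (F ≃* Multiplicative (Fin b → ZMod a))) :
    a ≤ C.factorial * C := by
  obtain ⟨e⟩ := hiso
  obtain ⟨ψ, f, hf⟩ := h F hF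
  have hcard : Nat.card F = a ^ b := by
    rw [Nat.card_congr (e.toEquiv.trans Multiplicative.toAdd), Nat.card_fun, Nat.card_zmod,
      Nat.card_fin]
  have ha : a ≠ 0 := by
    rintro rfl
    exact (Nat.card_pos (α := F)).ne' (by rw [hcard, zero_pow (by omega)])
  have hexp : ∀ x : F, x ^ a = 1 := fun x ↦ e.injective <| Multiplicative.toAdd.injective <| by
    ext i; simp [toAdd_pow]
  have hker : Nat.card ψ.ker ≤ a ^ k := by
    have hexp_ker (x : ψ.ker) : x ^ a = 1 := Subtype.ext (by simpa using hexp x)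
    simpa using AddCircle.card_le_of_injective_pi ha hexp_ker f hf
  have hbound : a ^ b ≤ a ^ k * C := by
    rw [← hcard, ← ψ.ker.card_mul_index]
    exact Nat.mul_le_mul hker (ψ.index_ker_le hO)
  exact (Nat.le_of_pow_le_pow_mul ha hb hbound).trans (Nat.le_mul_of_pos_left C C.factorial_pos)
end
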